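/- Let N be a natural number, β : Fin N → ℝ with β ℓ > 0 for all ℓ, and equip V := Fin N → ℝ³ with the mass-lumped inner product ⟨φ, ψ⟩_h := ∑ ℓ, β ℓ * (φ ℓ ⬝ ψ ℓ). Let k > 0, α > 0, h, m ∈ V, and suppose η ∈ V satisfies, for every φ ∈ V, (2/k) * ⟨η, φ⟩_h + ∑ ℓ, β ℓ * ((η ℓ ×ᵥ h ℓ) ⬝ φ ℓ) + (α/(2k)) * ∑ ℓ, β ℓ * ((η ℓ ×ᵥ m ℓ) ⬝ φ ℓ) = (2/k) * ⟨m, φ⟩_h. Then the updated magnetization m' := 2 • η − m satisfies ‖m' ℓ‖ = ‖m ℓ‖ for every node ℓ. -/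

import Mathlib

open scoped InnerProductSpace BigOperators

noncomputable section

/-- ℝ³ with the Euclidean norm and inner product. -/
abbrev R3 := EuclideanSpace ℝ (Fin 3)

/-- The cross product on ℝ³. -/
def cross3 (a b : R3) : R3 := WithLp.toLp 2 (crossProduct a b)

/-- Mass-lumped inner product `⟨φ, ψ⟩_h := ∑ ℓ, β ℓ * (φ ℓ ⬝ ψ ℓ)`. -/
def innh {N : ℕ} (β : Fin N → ℝ) (φ ψ : Fin N → R3) : ℝ :=
  ∑ ℓ, β ℓ * ⟪φ ℓ, ψ ℓ⟫_ℝ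

/-!
Test the discrete equation with the nodal function equal to `η ℓ` at the node `ℓ` and zero
elsewhere. Mass lumping decouples the nodes, and both cross-product terms vanish because
`(η ℓ × v) ⬝ η ℓ = 0`, leaving `η ℓ ⬝ (η ℓ - m ℓ) = 0`. Since
`‖2 η - m‖² - ‖m‖² = 4 η ⬝ (η - m)`, the modulus is conserved.
-/

theorem inner_cross3_self_left (a b : R3) : ⟪cross3 a b, a⟫_ℝ = 0 := by
  have : ⟪cross3 a b, a⟫_ℝ = dotProduct (a : Fin 3 → ℝ) (crossProduct a b) := by
    simp [cross3, PiLp.inner_apply, dotProduct]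
  rw [this, dot_self_cross]

theorem sum_mul_inner_pi_single {ι E : Type*} [Fintype ι] [DecidableEq ι]
    [NormedAddCommGroup E] [InnerProductSpace ℝ E] (β : ι → ℝ) (g : ι → E) (ℓ : ι) (v : E) :
    ∑ j, β j * ⟪g j, (Pi.single ℓ v : ι → E) j⟫_ℝ = β ℓ * ⟪g ℓ, v⟫_ℝ := by
  rw [Fintype.sum_eq_single ℓ fun j hj => by simp [hj]]
  simp

theorem norm_two_smul_sub_eq_of_inner_sub_eq_zero {E : Type*} [NormedAddCommGroup E]
    [InnerProductSpace ℝ E] {x y : E} (hxy : ⟪x, x - y⟫_ℝ = 0) : ‖(2 : ℝ) • x - y‖ = ‖y‖ := by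
  have hsq : ‖(2 : ℝ) • x - y‖ ^ 2 = ‖y‖ ^ 2 + 4 * ⟪x, x - y⟫_ℝ := by
    rw [← real_inner_self_eq_norm_sq, ← real_inner_self_eq_norm_sq]
    simp only [inner_sub_left, inner_sub_right, real_inner_smul_left, real_inner_smul_right,
      real_inner_comm x y]
    ring
  rw [hxy, mul_zero, add_zero] at hsq
  exact (pow_left_inj₀ (norm_nonneg _) (norm_nonneg _) two_ne_zero).mp hsq

theorem stmt6_general {N : ℕ} (β : Fin N → ℝ) (hβ : ∀ ℓ, 0 < β ℓ)
    (k α : ℝ) (hk : 0 < k) (h m η : Fin N → R3)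
    (hη : ∀ φ : Fin N → R3,
      (2 / k) * innh β η φ
        + (∑ ℓ, β ℓ * ⟪cross3 (η ℓ) (h ℓ), φ ℓ⟫_ℝ)
        + (α / (2 * k)) * (∑ ℓ, β ℓ * ⟪cross3 (η ℓ) (m ℓ), φ ℓ⟫_ℝ)
        = (2 / k) * innh β m φ) :
    ∀ ℓ : Fin N, ‖((2:ℝ) • η - m) ℓ‖ = ‖m ℓ‖ := by
  intro ℓ
  have hnode := hη (Pi.single ℓ (η ℓ))
  simp only [innh, sum_mul_inner_pi_single, inner_cross3_self_left, mul_zero, add_zero]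
    at hnode
  have hscale : 2 / k * β ℓ ≠ 0 := (mul_pos (by positivity) (hβ ℓ)).ne'
  have horth : ⟪η ℓ, η ℓ - m ℓ⟫_ℝ = 0 := by
    rw [inner_sub_right, real_inner_comm (m ℓ), sub_eq_zero]
    exact mul_left_cancel₀ hscale (by linarith)
  exact norm_two_smul_sub_eq_of_inner_sub_eq_zero horth

/-- the update `m' := 2 • η − m` of the midpoint scheme with inexact
solver conserves the modulus of the magnetization at every node (Remark 5.2(ii)). -/
theorem stmt6 {N : ℕ} (β : Fin N → ℝ) (hβ : ∀ ℓ, 0 < β ℓ)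
    (k α : ℝ) (hk : 0 < k) (hα : 0 < α) (h m η : Fin N → R3)
    (hη : ∀ φ : Fin N → R3,
      (2 / k) * innh β η φ
        + (∑ ℓ, β ℓ * ⟪cross3 (η ℓ) (h ℓ), φ ℓ⟫_ℝ)
        + (α / (2 * k)) * (∑ ℓ, β ℓ * ⟪cross3 (η ℓ) (m ℓ), φ ℓ⟫_ℝ)
        = (2 / k) * innh β m φ) :
    ∀ ℓ : Fin N, ‖((2:ℝ) • η - m) ℓ‖ = ‖m ℓ‖ :=
  stmt6_general β hβ k α hk h m η hη
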